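/- For any standard symbol S, the graph on the underlying multiset of entries whose edges are the pairs (j, ψ(j)) of S, together with the fixed points, uses each element of the bottom row exactly once as a source; consequently swapping any subset of pairs and reordering rows produces 2^p distinct symbols, all having the same multiset union of entries as S, where p is the number of pairs. -/
import Mathlib


open Finset

/-- Auxiliary data for Lusztig's construction: given rows `β` (top) and `γ` (bottom),
`glevAux β γ l = (assigned, used)` where `assigned` is the set of elements of `γ`
lying in `γ⁰ ∪ ⋯ ∪ γ^l` and `used` is the set of their images under `ψ`. -/
def glevAux (β γ : Finset ℕ) : ℕ → Finset ℕ × Finset ℕ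
  | 0 => (γ ∩ β, γ ∩ β)
  | l + 1 =>
      let p := glevAux β γ l
      let new := (γ \ p.1).filter (fun j => l + 1 ≤ j ∧ j - (l + 1) ∈ β \ p.2)
      (p.1 ∪ new, p.2 ∪ new.image (fun j => j - (l + 1)))

/-- The set `γ^l` of Lusztig's construction. -/
def glev (β γ : Finset ℕ) : ℕ → Finset ℕ
  | 0 => γ ∩ β
  | l + 1 =>
      let p := glevAux β γ l
      (γ \ p.1).filter (fun j => l + 1 ≤ j ∧ j - (l + 1) ∈ β \ p.2)

/-- The level of `j`: the `l` such that `j ∈ γ^l` (defaulting to `0`). -/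
def lusLevel (β γ : Finset ℕ) (j : ℕ) : ℕ :=
  ((List.range (j + 1)).find? (fun l => decide (j ∈ glev β γ l))).getD 0

/-- Lusztig's injection `ψ : γ → β`, `ψ(j) = j - l` for `j ∈ γ^l`. -/
def lusPsi (β γ : Finset ℕ) (j : ℕ) : ℕ := j - lusLevel β γ j

/-- The pairs of the standard symbol, recorded by their sources:
the set of `j ∈ γ` with `ψ(j) ≠ j`. -/
def lusPairs (β γ : Finset ℕ) : Finset ℕ := γ.filter (fun j => lusPsi β γ j ≠ j)

/-- Swapping the subset `P` of pairs of the standard symbol `(β, γ)`: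
each `j ∈ P` moves to the top row and `ψ(j)` moves to the bottom row.
The result is `(top row, bottom row)`. -/
def swapSymbol (β γ : Finset ℕ) (P : Finset ℕ) : Finset ℕ × Finset ℕ :=
  ((β \ P.image (lusPsi β γ)) ∪ P, (γ \ P) ∪ P.image (lusPsi β γ))

/-- The set `𝒞(S)` of symbols obtained from the standard symbol `S = (β, γ)`
by swapping subsets of its pairs. -/
def Cset (β γ : Finset ℕ) : Finset (Finset ℕ × Finset ℕ) :=
  (lusPairs β γ).powerset.image (swapSymbol β γ)

/-- A standard symbol: top row `β`, bottom row `γ`, both consisting of positive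
integers, with `γ` no longer than `β` and the top row entrywise `≤` the bottom row. -/
def IsStandardSymbol (β γ : Finset ℕ) : Prop :=
  0 ∉ β ∧ 0 ∉ γ ∧ γ.card ≤ β.card ∧
    ∀ k < γ.card, (β.sort (· ≤ ·)).getD k 0 ≤ (γ.sort (· ≤ ·)).getD k 0

/-- The multisegment `𝐦(λ, a) = Σ_k [k, k + λ_k − 1]` (segments as pairs of
endpoints, 1-indexed rows, empty segments discarded). -/
def mseg (a : ℕ) (l : Fin a → ℕ) : Multiset (ℕ × ℕ) :=
  (Finset.univ.filter (fun k : Fin a => 0 < l k)).val.map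
    (fun k => (k.val + 1, k.val + l k))

/-- The multisegment attached to one row of a symbol: the row `β` corresponds to
`λ_k = β_k − k`, giving the segments `[k, β_k − 1]` for those `k` with `β_k > k`. -/
def msegRow (β : Finset ℕ) : Multiset (ℕ × ℕ) :=
  ↑(((List.range β.card).filter (fun k => k + 1 < (β.sort (· ≤ ·)).getD k 0)).map
      (fun k => (k + 1, (β.sort (· ≤ ·)).getD k 0 - 1)))

/-- The multisegment `𝐦(S)` of a symbol `S = (top, bottom)`. -/
def msegSym (S : Finset ℕ × Finset ℕ) : Multiset (ℕ × ℕ) :=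
  msegRow S.1 + msegRow S.2

/-- The total size of a multisegment: the sum of the lengths of its segments. -/
def msize (m : Multiset (ℕ × ℕ)) : ℕ := (m.map (fun s => s.2 + 1 - s.1)).sum

/-- `N_m(λ, a)`: the number of cells of the filled Young diagram of `(λ, a)`
containing the integer `m`; row `k` is filled with `k, k+1, …, k + λ_k − 1`. -/
def Ncells (a : ℕ) (l : Fin a → ℕ) (m : ℕ) : ℕ :=
  ∑ k : Fin a, ((Finset.range (l k)).filter (fun c => k.val + 1 + c = m)).card

/-- `n(S, Σ)`: the number of pairs of the standard symbol `S = (β, γ)` swapped to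
obtain `Σ` (the subset being unique, we sum the cardinalities of all matching subsets). -/
def nswap (β γ : Finset ℕ) (T : Finset ℕ × Finset ℕ) : ℕ :=
  ((lusPairs β γ).powerset.filter (fun P => swapSymbol β γ P = T)).sum Finset.card

-- lemmas
lemma aux_snd_le_succ (β γ : Finset ℕ) (l : ℕ) :
    (glevAux β γ l).2 ⊆ (glevAux β γ (l+1)).2 := by
  simp only [glevAux]
  exact subset_union_left

lemma aux_snd_mono (β γ : Finset ℕ) {l l' : ℕ} (h : l ≤ l') :
    (glevAux β γ l).2 ⊆ (glevAux β γ l').2 := by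
  induction h with
  | refl => exact Finset.Subset.refl _
  | step _ ih => exact ih.trans (aux_snd_le_succ β γ _)

lemma inter_subset_snd (β γ : Finset ℕ) (l : ℕ) : γ ∩ β ⊆ (glevAux β γ l).2 := by
  have : (glevAux β γ 0).2 = γ ∩ β := rfl
  exact this ▸ aux_snd_mono β γ (Nat.zero_le l)

lemma mem_glev_succ {β γ : Finset ℕ} {l j : ℕ} (h : j ∈ glev β γ (l+1)) :
    j ∈ γ ∧ l + 1 ≤ j ∧ j - (l+1) ∈ β \ (glevAux β γ l).2 := by
  simp only [glev, Finset.mem_filter, Finset.mem_sdiff] at h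
  exact ⟨h.1.1, h.2.1, Finset.mem_sdiff.mpr h.2.2⟩

lemma glev_succ_image {β γ : Finset ℕ} {l j : ℕ} (h : j ∈ glev β γ (l+1)) :
    j - (l+1) ∈ (glevAux β γ (l+1)).2 := by
  have : (glevAux β γ (l+1)).2 = (glevAux β γ l).2 ∪
      (((γ \ (glevAux β γ l).1).filter
        (fun j => l + 1 ≤ j ∧ j - (l + 1) ∈ β \ (glevAux β γ l).2)).image
        (fun j => j - (l + 1))) := rfl
  rw [this]
  exact Finset.mem_union_right _ (Finset.mem_image_of_mem _ h)

lemma psi_eq_of_mem_inter {β γ : Finset ℕ} {j : ℕ} (h : j ∈ γ ∩ β) :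
    lusPsi β γ j = j := by
  have h0 : j ∈ glev β γ 0 := h
  have : lusLevel β γ j = 0 := by
    unfold lusLevel
    rw [List.range_succ_eq_map]
    simp [List.find?, h0]
  simp [lusPsi, this]

lemma psi_spec (β γ : Finset ℕ) (j : ℕ) :
    lusPsi β γ j = j ∨ ∃ l, j ∈ glev β γ (l+1) ∧ lusPsi β γ j = j - (l+1) := by
  unfold lusPsi lusLevel
  cases hf : (List.range (j+1)).find? (fun l => decide (j ∈ glev β γ l)) with
  | none => left; simp
  | some l =>
    have hl := List.find?_some hf
    simp only [decide_eq_true_eq] at hl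
    cases l with
    | zero => left; simp
    | succ m => right; exact ⟨m, hl, by simp⟩
lemma psi_injOn (β γ : Finset ℕ) : Set.InjOn (lusPsi β γ) ↑γ := by
  intro a ha b hb hab
  simp only [Finset.mem_coe] at ha hb
  rcases psi_spec β γ a with h1 | ⟨l1, hm1, he1⟩ <;>
    rcases psi_spec β γ b with h2 | ⟨l2, hm2, he2⟩
  · rw [← h1, ← h2, hab]
  · -- a = psi a = psi b = b - (l2+1) ∈ β \ used_{l2}, but a ∈ γ ∩ β ⊆ used
    exfalso
    have hbb := (mem_glev_succ hm2).2.2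
    rw [Finset.mem_sdiff] at hbb
    rw [← he2, ← hab, h1] at hbb
    exact hbb.2 (inter_subset_snd β γ l2 (Finset.mem_inter.mpr ⟨ha, hbb.1⟩))
  · exfalso
    have hbb := (mem_glev_succ hm1).2.2
    rw [Finset.mem_sdiff] at hbb
    rw [← he1, hab, h2] at hbb
    exact hbb.2 (inter_subset_snd β γ l1 (Finset.mem_inter.mpr ⟨hb, hbb.1⟩))
  · have ha1 := (mem_glev_succ hm1).2.1
    have hb1 := (mem_glev_succ hm2).2.1
    rw [he1, he2] at hab
    rcases lt_trichotomy l1 l2 with hl | rfl | hl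
    · exfalso
      have h1' := glev_succ_image hm1
      have h2' := (mem_glev_succ hm2).2.2
      rw [Finset.mem_sdiff] at h2'
      rw [← hab] at h2'
      exact h2'.2 (aux_snd_mono β γ hl h1')
    · omega
    · exfalso
      have h2' := glev_succ_image hm2
      have h1' := (mem_glev_succ hm1).2.2
      rw [Finset.mem_sdiff] at h1'
      rw [hab] at h1'
      exact h1'.2 (aux_snd_mono β γ hl h2')

lemma pair_psi_spec {β γ : Finset ℕ} {j : ℕ} (hj : j ∈ lusPairs β γ) :
    ∃ l, j ∈ glev β γ (l+1) ∧ lusPsi β γ j = j - (l+1) := by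
  simp only [lusPairs, Finset.mem_filter] at hj
  rcases psi_spec β γ j with h | h
  · exact absurd h hj.2
  · exact h

lemma pair_mem_gamma {β γ : Finset ℕ} {j : ℕ} (hj : j ∈ lusPairs β γ) : j ∈ γ :=
  (Finset.mem_filter.mp hj).1

lemma pair_not_mem_beta {β γ : Finset ℕ} {j : ℕ} (hj : j ∈ lusPairs β γ) : j ∉ β := by
  intro hb
  exact (Finset.mem_filter.mp hj).2
    (psi_eq_of_mem_inter (Finset.mem_inter.mpr ⟨pair_mem_gamma hj, hb⟩))

lemma psi_pair_mem_beta {β γ : Finset ℕ} {j : ℕ} (hj : j ∈ lusPairs β γ) :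
    lusPsi β γ j ∈ β := by
  obtain ⟨l, hm, he⟩ := pair_psi_spec hj
  have := (mem_glev_succ hm).2.2
  rw [Finset.mem_sdiff] at this
  rw [he]; exact this.1

lemma psi_pair_not_mem_gamma {β γ : Finset ℕ} {j : ℕ} (hj : j ∈ lusPairs β γ) :
    lusPsi β γ j ∉ γ := by
  obtain ⟨l, hm, he⟩ := pair_psi_spec hj
  have hsd := (mem_glev_succ hm).2.2
  rw [Finset.mem_sdiff] at hsd
  intro hg
  rw [he] at hg
  exact hsd.2 (inter_subset_snd β γ l (Finset.mem_inter.mpr ⟨hg, hsd.1⟩))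

lemma image_psi_disj_gamma {β γ P : Finset ℕ} (hP : P ⊆ lusPairs β γ) :
    Disjoint (P.image (lusPsi β γ)) γ := by
  rw [Finset.disjoint_left]
  rintro a ha hag
  obtain ⟨j, hj, rfl⟩ := Finset.mem_image.mp ha
  exact psi_pair_not_mem_gamma (hP hj) hag

/-- Each bottom-row element is the source of exactly one edge (`ψ` is defined on
all of `γ` and injective); consequently swapping subsets of pairs gives `2^p`
distinct symbols, all with the same multiset of entries as `S`. -/
theorem swap_distinct_same_entries (β γ : Finset ℕ) (h : IsStandardSymbol β γ) :
    Set.InjOn (lusPsi β γ) ↑γ ∧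
    Set.InjOn (swapSymbol β γ) ↑(lusPairs β γ).powerset ∧
    (Cset β γ).card = 2 ^ (lusPairs β γ).card ∧
    ∀ P ∈ (lusPairs β γ).powerset,
      (swapSymbol β γ P).1.val + (swapSymbol β γ P).2.val = β.val + γ.val := by
  have hswap : Set.InjOn (swapSymbol β γ) ↑(lusPairs β γ).powerset := by
    intro P hP Q hQ hPQ
    simp only [Finset.coe_powerset, Set.mem_preimage, Set.mem_powerset_iff,
      ← Finset.coe_subset] at hP hQ
    have hP' : P ⊆ lusPairs β γ := by exact_mod_cast hP
    have hQ' : Q ⊆ lusPairs β γ := by exact_mod_cast hQ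
    have h2 : (γ \ P) ∪ P.image (lusPsi β γ) = (γ \ Q) ∪ Q.image (lusPsi β γ) :=
      congrArg Prod.snd hPQ
    have key : γ \ P = γ \ Q := by
      have e1 : ((γ \ P) ∪ P.image (lusPsi β γ)) ∩ γ = γ \ P := by
        rw [Finset.union_inter_distrib_right,
          Finset.disjoint_iff_inter_eq_empty.mp (image_psi_disj_gamma hP'),
          Finset.union_empty, Finset.inter_eq_left]
        exact Finset.sdiff_subset
      have e2 : ((γ \ Q) ∪ Q.image (lusPsi β γ)) ∩ γ = γ \ Q := by
        rw [Finset.union_inter_distrib_right,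
          Finset.disjoint_iff_inter_eq_empty.mp (image_psi_disj_gamma hQ'),
          Finset.union_empty, Finset.inter_eq_left]
        exact Finset.sdiff_subset
      rw [← e1, ← e2, h2]
    have hPγ : P ⊆ γ := hP'.trans (Finset.filter_subset _ _)
    have hQγ : Q ⊆ γ := hQ'.trans (Finset.filter_subset _ _)
    calc P = γ \ (γ \ P) := (Finset.sdiff_sdiff_eq_self hPγ).symm
    _ = γ \ (γ \ Q) := by rw [key]
    _ = Q := Finset.sdiff_sdiff_eq_self hQγ
  refine ⟨psi_injOn β γ, hswap, ?_, ?_⟩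
  · rw [Cset, Finset.card_image_of_injOn hswap, Finset.card_powerset]
  · intro P hP
    rw [Finset.mem_powerset] at hP
    set A := P.image (lusPsi β γ) with hA
    have hPγ : P ⊆ γ := hP.trans (Finset.filter_subset _ _)
    have hAβ : A ⊆ β := by
      intro a ha
      obtain ⟨j, hj, rfl⟩ := Finset.mem_image.mp ha
      exact psi_pair_mem_beta (hP hj)
    have hAγ : Disjoint A γ := image_psi_disj_gamma hP
    have hPβ : Disjoint P β := by
      rw [Finset.disjoint_left]
      exact fun a ha => pair_not_mem_beta (hP ha)
    have d1 : Disjoint (β \ A) P := (Finset.disjoint_of_subset_left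
      Finset.sdiff_subset hPβ.symm)
    have d2 : Disjoint (γ \ P) A := (Finset.disjoint_of_subset_left
      Finset.sdiff_subset hAγ.symm)
    have h1 : ((β \ A) ∪ P).val = (β \ A).val + P.val := by
      rw [← Finset.disjUnion_eq_union _ _ d1]; rfl
    have h2 : ((γ \ P) ∪ A).val = (γ \ P).val + A.val := by
      rw [← Finset.disjUnion_eq_union _ _ d2]; rfl
    have h3 : (β \ A).val + A.val = β.val := by
      have : ((β \ A) ∪ A).val = (β \ A).val + A.val := by
        rw [← Finset.disjUnion_eq_union _ _ Finset.sdiff_disjoint]; rfl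
      rw [← this, Finset.sdiff_union_of_subset hAβ]
    have h4 : (γ \ P).val + P.val = γ.val := by
      have : ((γ \ P) ∪ P).val = (γ \ P).val + P.val := by
        rw [← Finset.disjUnion_eq_union _ _ Finset.sdiff_disjoint]; rfl
      rw [← this, Finset.sdiff_union_of_subset hPγ]
    show ((β \ A) ∪ P).val + ((γ \ P) ∪ A).val = β.val + γ.val
    rw [h1, h2, ← h3, ← h4]
    abel
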